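/- Let n ≥ 1 and let a_1 ≤ a_2 ≤ … ≤ a_n be real numbers sorted in nondecreasing order. Then the minimum of ∑_{i∈S} a_i over all subsets S ⊆ {1,…,n} of odd cardinality equals a_1 + ∑_{t=1}^{⌊(n−1)/2⌋} min(0, a_{2t} + a_{2t+1}). (This is the value computed by Algorithm 2 on a branch where the forced part of the codeword has odd size: the smallest element is added first, even if it is positive, and thereafter consecutive pairs are added exactly when their sum is negative.) -/

import Mathlib

/-!
An odd set `S = {s₀ < s₁ < … < s₂ₖ}` of indices satisfies `sᵢ ≥ i`, so by monotonicity its sum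
is at least `a 0 + ∑_{j<k} (a (2j+1) + a (2j+2))`, and each pair sum is at least its `min` with `0`.
Conversely, `{0}` together with the pairs `{2t+1, 2t+2}` of negative sum attains the bound.
-/

open Finset

theorem Finset.sum_range_card_le_sum {M : Type*} [AddCommMonoid M] [PartialOrder M]
    [IsOrderedAddMonoid M] (S : Finset ℕ) (a : ℕ → M) (ha : ∀ i j, i ≤ j → j ∈ S → a i ≤ a j) :
    ∑ i ∈ range #S, a i ≤ ∑ i ∈ S, a i := by
  induction S using Finset.induction_on_max with
  | empty => simp
  | insert x s hlt ih =>
    have hx : x ∉ s := fun h => (hlt x h).false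
    have hcard : #s ≤ x := by
      simpa using card_le_card (fun y hy => mem_range.2 (hlt y hy) : s ⊆ range x)
    rw [card_insert_of_notMem hx, sum_range_succ, sum_insert hx, add_comm (a x)]
    exact add_le_add (ih fun i j hij hj => ha i j hij (mem_insert_of_mem hj))
      (ha _ _ hcard (mem_insert_self x s))

theorem Finset.sum_range_two_mul_add_one {M : Type*} [AddCommMonoid M] (f : ℕ → M) (k : ℕ) :
    ∑ i ∈ range (2 * k + 1), f i = f 0 + ∑ j ∈ range k, (f (2 * j + 1) + f (2 * j + 2)) := by
  induction k with
  | zero => simp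
  | succ k ih =>
    rw [show 2 * (k + 1) + 1 = 2 * k + 1 + 1 + 1 by ring, sum_range_succ, sum_range_succ, ih,
      sum_range_succ, add_assoc, add_assoc]

section MinZero

variable {M : Type*} [AddCommMonoid M] [LinearOrder M]

theorem Finset.sum_filter_neg_eq_sum_min_zero {ι : Type*} (s : Finset ι) (b : ι → M) :
    ∑ i ∈ s.filter (b · < 0), b i = ∑ i ∈ s, min 0 (b i) := by
  rw [sum_filter]
  refine sum_congr rfl fun i _ => ?_
  split_ifs with h
  · exact (min_eq_right h.le).symm
  · exact (min_eq_left (not_lt.mp h)).symm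

theorem Finset.sum_range_min_zero_le [IsOrderedAddMonoid M] {k m : ℕ} (hkm : k ≤ m) (b : ℕ → M) :
    ∑ i ∈ range m, min 0 (b i) ≤ ∑ i ∈ range k, b i :=
  calc ∑ i ∈ range m, min 0 (b i) ≤ ∑ i ∈ range k, min 0 (b i) :=
        sum_le_sum_of_subset_of_nonpos' (range_subset_range.2 hkm) fun _ _ _ => min_le_left _ _
    _ ≤ ∑ i ∈ range k, b i := sum_le_sum fun _ _ => min_le_right _ _

end MinZero

def pairUnion (T : Finset ℕ) : Finset ℕ :=
  T.biUnion fun t => {2 * t + 1, 2 * t + 2}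

theorem pairwiseDisjoint_pairs (T : Set ℕ) :
    T.PairwiseDisjoint fun t => ({2 * t + 1, 2 * t + 2} : Finset ℕ) := by
  intro t _ t' _ hne
  simp only [Function.onFun, disjoint_left, mem_insert, mem_singleton]
  omega

theorem card_pairUnion (T : Finset ℕ) : #(pairUnion T) = 2 * #T := by
  rw [pairUnion, card_biUnion (pairwiseDisjoint_pairs _), mul_comm, ← smul_eq_mul, ← sum_const]
  exact sum_congr rfl fun t _ => card_pair (by omega)

theorem sum_pairUnion {M : Type*} [AddCommMonoid M] (T : Finset ℕ) (a : ℕ → M) :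
    ∑ i ∈ pairUnion T, a i = ∑ t ∈ T, (a (2 * t + 1) + a (2 * t + 2)) := by
  rw [pairUnion, sum_biUnion (pairwiseDisjoint_pairs _)]
  exact sum_congr rfl fun t _ => sum_pair (by omega)

theorem zero_notMem_pairUnion (T : Finset ℕ) : 0 ∉ pairUnion T := by
  simp only [pairUnion, mem_biUnion, mem_insert, mem_singleton]
  omega

theorem pairUnion_subset_range {T : Finset ℕ} {m : ℕ} (hT : T ⊆ range m) :
    pairUnion T ⊆ range (2 * m + 1) := by
  intro i hi
  simp only [pairUnion, mem_biUnion, mem_insert, mem_singleton] at hi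
  obtain ⟨t, ht, rfl | rfl⟩ := hi <;> have := mem_range.1 (hT ht) <;> simp only [mem_range] <;> omega

theorem exists_odd_subset_sum_eq (n : ℕ) (hn : 1 ≤ n) (a : ℕ → ℝ) :
    ∃ S ⊆ range n, Odd #S ∧
      ∑ i ∈ S, a i = a 0 + ∑ t ∈ range ((n - 1) / 2), min 0 (a (2 * t + 1) + a (2 * t + 2)) := by
  set T := (range ((n - 1) / 2)).filter fun t => a (2 * t + 1) + a (2 * t + 2) < 0
  refine ⟨insert 0 (pairUnion T), ?_, ?_, ?_⟩
  · refine insert_subset (mem_range.2 hn) ((pairUnion_subset_range (filter_subset _ _)).trans ?_)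
    exact range_subset_range.2 (by omega)
  · rw [card_insert_of_notMem (zero_notMem_pairUnion T), card_pairUnion]
    exact odd_two_mul_add_one _
  · rw [sum_insert (zero_notMem_pairUnion T), sum_pairUnion,
      sum_filter_neg_eq_sum_min_zero (b := fun t => a (2 * t + 1) + a (2 * t + 2))]

theorem le_sum_of_odd_card (n : ℕ) (a : ℕ → ℝ) (hmono : ∀ i j, i ≤ j → j < n → a i ≤ a j)
    {S : Finset ℕ} (hS : S ⊆ range n) (hodd : Odd #S) :
    a 0 + ∑ t ∈ range ((n - 1) / 2), min 0 (a (2 * t + 1) + a (2 * t + 2)) ≤ ∑ i ∈ S, a i := by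
  obtain ⟨k, hk⟩ := hodd
  have hkn : k ≤ (n - 1) / 2 := by
    have := card_le_card hS
    rw [card_range] at this
    omega
  calc a 0 + ∑ t ∈ range ((n - 1) / 2), min 0 (a (2 * t + 1) + a (2 * t + 2))
      ≤ a 0 + ∑ t ∈ range k, (a (2 * t + 1) + a (2 * t + 2)) := by
        gcongr
        exact sum_range_min_zero_le hkn (fun t => a (2 * t + 1) + a (2 * t + 2))
    _ = ∑ i ∈ range #S, a i := by rw [hk, sum_range_two_mul_add_one]
    _ ≤ ∑ i ∈ S, a i :=
        sum_range_card_le_sum S a fun i j hij hj => hmono i j hij (mem_range.1 (hS hj))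

/-- For `n ≥ 1` and reals `a 0 ≤ a 1 ≤ … ≤ a (n-1)` in nondecreasing order,
the minimum of `∑ i ∈ S, a i` over odd-cardinality subsets `S ⊆ {0,…,n-1}` equals
`a 0 + ∑ t < (n-1)/2, min 0 (a (2t+1) + a (2t+2))`, the value computed by Algorithm 2
on a branch whose forced part has odd size. -/
theorem odd_subset_min_sum
    (n : ℕ) (hn : 1 ≤ n) (a : ℕ → ℝ) (hmono : ∀ i j, i ≤ j → j < n → a i ≤ a j) :
    IsLeast {x : ℝ | ∃ S ⊆ Finset.range n, Odd S.card ∧ x = ∑ i ∈ S, a i}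
      (a 0 + ∑ t ∈ Finset.range ((n - 1) / 2), min 0 (a (2 * t + 1) + a (2 * t + 2))) := by
  refine ⟨?_, ?_⟩
  · obtain ⟨S, hS, hodd, hsum⟩ := exists_odd_subset_sum_eq n hn a
    exact ⟨S, hS, hodd, hsum.symm⟩
  · rintro x ⟨S, hS, hodd, rfl⟩
    exact le_sum_of_odd_card n a hmono hS hodd
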